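/- arXiv:1202.5236 — 5 statements merged into one kernel-verified Lean document; each statement's English description precedes it below -/
import Mathlib

section
/- Let a, b, c, b₀, c₁ be real numbers with c₁ > 0, |c| ≤ c₁, 0 < b₀ ≤ |b|, and |a| ≤ b₀²/(4c₁). Then there exists a real number x* with a·(x*)² + b·x* + c = 0 and |x*| ≤ 2c₁/b₀. -/
/-!
The bound on `|a|` gives `4|a||c| ≤ b₀² ≤ b²`, so the discriminant is nonnegative. Take the root in
the form `x = -2c / (b + s)`, where `s` is the square root of the discriminant with the sign of `b`;
this formula stays valid for `a = 0`, and since `|b + s| ≥ |b|` it gives `|x| ≤ 2|c| / |b|`.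
-/

theorem quadratic_eq_zero_at_neg_two_mul_div_add {K : Type*} [Field K] {a b c s : K}
    (hs : discrim a b c = s * s) (hbs : b + s ≠ 0) :
    let x := -(2 * c) / (b + s)
    a * (x * x) + b * x + c = 0 := by
  rw [discrim] at hs
  field_simp
  linear_combination -c * hs

theorem exists_mul_self_eq_and_mul_nonneg {D : ℝ} (hD : 0 ≤ D) (b : ℝ) :
    ∃ s, D = s * s ∧ 0 ≤ b * s := by
  rcases le_total 0 b with hb | hb
  · exact ⟨√D, (Real.mul_self_sqrt hD).symm, mul_nonneg hb (Real.sqrt_nonneg D)⟩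
  · exact ⟨-√D, by rw [neg_mul_neg, Real.mul_self_sqrt hD],
      mul_nonneg_of_nonpos_of_nonpos hb (neg_nonpos.mpr (Real.sqrt_nonneg D))⟩

theorem abs_le_abs_add_of_mul_nonneg {R : Type*} [CommRing R] [LinearOrder R] [IsStrictOrderedRing R]
    {b s : R} (h : 0 ≤ b * s) : |b| ≤ |b + s| :=
  sq_le_sq.mp (by nlinarith [mul_self_nonneg s])

theorem exists_quadratic_eq_zero_abs_le {a b c : ℝ} (hb : b ≠ 0) (hD : 0 ≤ discrim a b c) :
    ∃ x, a * (x * x) + b * x + c = 0 ∧ |x| ≤ 2 * |c| / |b| := by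
  obtain ⟨s, hs, hbs⟩ := exists_mul_self_eq_and_mul_nonneg hD b
  have hle : |b| ≤ |b + s| := abs_le_abs_add_of_mul_nonneg hbs
  have hpos : 0 < |b| := abs_pos.mpr hb
  refine ⟨_, quadratic_eq_zero_at_neg_two_mul_div_add hs (abs_pos.mp (hpos.trans_le hle)), ?_⟩
  rw [abs_div, abs_neg, abs_mul, abs_two]
  exact div_le_div_of_nonneg_left (by positivity) hpos hle

theorem discrim_nonneg_of_four_mul_abs_mul_le {a b c : ℝ} (h : 4 * |a * c| ≤ b ^ 2) :
    0 ≤ discrim a b c := by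
  rw [discrim]
  linarith [le_abs_self (a * c)]

/-- Under the stated coefficient bounds, the quadratic
`a x² + b x + c` has a real root `x*` with `|x*| ≤ 2c₁/b₀`. -/
theorem quadratic_root_bound
    (a b c b₀ c₁ : ℝ) (hc₁ : 0 < c₁) (hc : |c| ≤ c₁)
    (hb₀ : 0 < b₀) (hb : b₀ ≤ |b|) (ha : |a| ≤ b₀ ^ 2 / (4 * c₁)) :
    ∃ x : ℝ, a * x ^ 2 + b * x + c = 0 ∧ |x| ≤ 2 * c₁ / b₀ := by
  have hac : 4 * |a * c| ≤ b ^ 2 :=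
    calc 4 * |a * c| = 4 * |a| * |c| := by rw [abs_mul, mul_assoc]
      _ ≤ 4 * (b₀ ^ 2 / (4 * c₁)) * c₁ := by gcongr
      _ = b₀ ^ 2 := by field_simp
      _ ≤ b ^ 2 := by rw [← sq_abs b]; gcongr
  obtain ⟨x, hroot, hx⟩ := exists_quadratic_eq_zero_abs_le (abs_pos.mp (hb₀.trans_le hb))
    (discrim_nonneg_of_four_mul_abs_mul_le hac)
  refine ⟨x, by rw [sq]; exact hroot, hx.trans ?_⟩
  exact div_le_div₀ (by positivity) (by gcongr) hb₀ hb
end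

section
/- Let f : ℝ → ℝ be twice continuously differentiable, let x* be a local maximum of f, and assume f''(x*) < 0. Then there exists ε > 0 such that for every grid spacing dx with 0 < dx < ε and every grid offset x₀ ∈ ℝ, there exists an integer k such that the grid point x^g = x₀ + k·dx satisfies |x^g − x*| ≤ dx, f(x^g) ≥ f(x^g + dx), and f(x^g) ≥ f(x^g − dx). -/
/-!
Since `f' x* = 0` and `f'' x* < 0`, the derivative `f'` changes sign from `+` to `-` at `x*`, so
`f` is monotone on `[x* - δ, x*]` and antitone on `[x*, x* + δ]` for some `δ > 0`. When
`2 dx ≤ δ`, let `x` be the grid point with `x* - dx < x ≤ x*`. If `f (x + dx) ≤ f x`, then `x` is a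
ridge point, its left neighbour lying on the increasing branch; otherwise `x + dx` is one, its
right neighbour lying on the decreasing branch.
-/

open Set Topology

def IsGridRidgePoint (f : ℝ → ℝ) (dx x : ℝ) : Prop :=
  f x ≥ f (x + dx) ∧ f x ≥ f (x - dx)

theorem exists_monotoneOn_antitoneOn_of_deriv_deriv_neg {f : ℝ → ℝ} {c : ℝ}
    (hd : ∀ᶠ y in 𝓝 c, DifferentiableAt ℝ f y) (hf' : deriv f c = 0)
    (hf'' : deriv (deriv f) c < 0) :
    ∃ δ > 0, MonotoneOn f (Icc (c - δ) c) ∧ AntitoneOn f (Icc c (c + δ)) := by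
  obtain ⟨r, hr, hball⟩ := Metric.eventually_nhds_iff.mp
    (hd.and (eventually_nhdsWithin_sign_eq_of_deriv_neg hf'' hf'))
  have hnear {y : ℝ} (hy : y ∈ Icc (c - r / 2) (c + r / 2)) :
      DifferentiableAt ℝ f y ∧ SignType.sign (deriv f y) = SignType.sign (c - y) :=
    hball <| by rw [Real.dist_eq, abs_lt]; constructor <;> linarith [hy.1, hy.2]
  refine ⟨r / 2, half_pos hr, ?_, ?_⟩
  · refine monotoneOn_of_deriv_nonneg (convex_Icc _ _)
      (fun y hy ↦ (hnear ⟨hy.1, by linarith [hy.2]⟩).1.continuousAt.continuousWithinAt)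
      (fun y hy ↦ ?_) (fun y hy ↦ ?_) <;> rw [interior_Icc] at hy
    · exact (hnear ⟨hy.1.le, by linarith [hy.2]⟩).1.differentiableWithinAt
    · have := (hnear ⟨hy.1.le, by linarith [hy.2]⟩).2
      rw [sign_pos (sub_pos.mpr hy.2), sign_eq_one_iff] at this
      exact this.le
  · refine antitoneOn_of_deriv_nonpos (convex_Icc _ _)
      (fun y hy ↦ (hnear ⟨by linarith [hy.1], hy.2⟩).1.continuousAt.continuousWithinAt)
      (fun y hy ↦ ?_) (fun y hy ↦ ?_) <;> rw [interior_Icc] at hy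
    · exact (hnear ⟨by linarith [hy.1], hy.2.le⟩).1.differentiableWithinAt
    · have := (hnear ⟨by linarith [hy.1], hy.2.le⟩).2
      rw [sign_neg (sub_neg.mpr hy.1), sign_eq_neg_one_iff] at this
      exact this.le

theorem isGridRidgePoint_or_isGridRidgePoint_add {f : ℝ → ℝ} {c dx x : ℝ} (hdx : 0 ≤ dx)
    (hmono : MonotoneOn f (Icc (c - 2 * dx) c)) (hanti : AntitoneOn f (Icc c (c + 2 * dx)))
    (hx : x ∈ Icc (c - dx) c) :
    IsGridRidgePoint f dx x ∨ IsGridRidgePoint f dx (x + dx) := by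
  obtain ⟨hcx, hxc⟩ := hx
  by_cases hstep : f (x + dx) ≤ f x
  · refine .inl ⟨hstep, hmono ⟨by linarith, by linarith⟩ ⟨by linarith, hxc⟩ (by linarith)⟩
  · refine .inr ⟨hanti ⟨by linarith, by linarith⟩ ⟨by linarith, by linarith⟩ (by linarith), ?_⟩
    rw [add_sub_cancel_right]
    exact (not_le.mp hstep).le

theorem exists_isGridRidgePoint_of_monotoneOn_antitoneOn {f : ℝ → ℝ} {c dx : ℝ} (hdx : 0 < dx)
    (hmono : MonotoneOn f (Icc (c - 2 * dx) c)) (hanti : AntitoneOn f (Icc c (c + 2 * dx)))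
    (x₀ : ℝ) : ∃ k : ℤ, |x₀ + k * dx - c| ≤ dx ∧ IsGridRidgePoint f dx (x₀ + k * dx) := by
  obtain ⟨k, ⟨hlo, hhi⟩, -⟩ := existsUnique_add_zsmul_mem_Ioc hdx x₀ (c - dx)
  rw [zsmul_eq_mul] at hlo hhi
  rw [sub_add_cancel] at hhi
  rcases isGridRidgePoint_or_isGridRidgePoint_add hdx.le hmono hanti ⟨hlo.le, hhi⟩ with h | h
  · exact ⟨k, abs_le.mpr ⟨by linarith, by linarith⟩, h⟩
  · refine ⟨k + 1, abs_le.mpr ⟨by push_cast; linarith, by push_cast; linarith⟩, ?_⟩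
    rwa [Int.cast_add, Int.cast_one, add_one_mul, ← add_assoc]

/-- If `f : ℝ → ℝ` is `C²`, `x*` is a local maximum of `f`, and
`f''(x*) < 0`, then there is `ε > 0` such that for every grid spacing
`0 < dx < ε` and every grid offset `x₀`, some grid point `x^g = x₀ + k·dx`
satisfies `|x^g − x*| ≤ dx`, `f(x^g) ≥ f(x^g + dx)` and `f(x^g) ≥ f(x^g − dx)`. -/
theorem grid_ridge_point_near_local_max
    (f : ℝ → ℝ) (hf : ContDiff ℝ 2 f) (xstar : ℝ)
    (hmax : IsLocalMax f xstar) (hf'' : deriv (deriv f) xstar < 0) :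
    ∃ ε > 0, ∀ dx : ℝ, 0 < dx → dx < ε → ∀ x₀ : ℝ, ∃ k : ℤ,
      |x₀ + k * dx - xstar| ≤ dx ∧
      f (x₀ + k * dx) ≥ f (x₀ + k * dx + dx) ∧
      f (x₀ + k * dx) ≥ f (x₀ + k * dx - dx) := by
  obtain ⟨δ, hδ, hmono, hanti⟩ := exists_monotoneOn_antitoneOn_of_deriv_deriv_neg
    (.of_forall (hf.differentiable two_ne_zero)) hmax.deriv_eq_zero hf''
  refine ⟨δ / 2, half_pos hδ, fun dx hdx hdxδ x₀ ↦ ?_⟩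
  exact exists_isGridRidgePoint_of_monotoneOn_antitoneOn hdx
    (hmono.mono (Icc_subset_Icc (by linarith) le_rfl))
    (hanti.mono (Icc_subset_Icc le_rfl (by linarith))) x₀
end

section
/- Let dx > 0, let x₂ ∈ ℝ and set x₁ = x₂ − dx, x₃ = x₂ + dx, x₄ = x₂ + 2dx. Let f : ℝ → ℝ be differentiable on [x₁, x₄] with derivative f' strictly decreasing on [x₁, x₄], and suppose there exists x* ∈ [x₂, x₃] with f'(x*) = 0. Then either (f(x₂) ≥ f(x₁) and f(x₂) ≥ f(x₃)) or (f(x₃) ≥ f(x₂) and f(x₃) ≥ f(x₄)); that is, x₂ or x₃ is a grid ridge point of f. -/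
/-- If `f` is differentiable on `[x₁, x₄] = [x₂ − dx, x₂ + 2dx]`
with strictly decreasing derivative there, and `f'` vanishes at some
`x* ∈ [x₂, x₃]`, then `x₂` or `x₃` is a grid ridge point of `f`. -/
theorem grid_ridge_point_bracketing
    (dx : ℝ) (hdx : 0 < dx) (x₂ : ℝ)
    (f : ℝ → ℝ)
    (hdiff : ∀ x ∈ Set.Icc (x₂ - dx) (x₂ + 2 * dx), DifferentiableAt ℝ f x)
    (hmono : StrictAntiOn (deriv f) (Set.Icc (x₂ - dx) (x₂ + 2 * dx)))
    (xstar : ℝ) (hxstar : xstar ∈ Set.Icc x₂ (x₂ + dx))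
    (hzero : deriv f xstar = 0) :
    (f x₂ ≥ f (x₂ - dx) ∧ f x₂ ≥ f (x₂ + dx)) ∨
    (f (x₂ + dx) ≥ f x₂ ∧ f (x₂ + dx) ≥ f (x₂ + 2 * dx)) := by
  obtain ⟨hx2s, hxs3⟩ := hxstar
  have h1s : x₂ - dx ≤ xstar := by linarith
  have hs4 : xstar ≤ x₂ + 2 * dx := by linarith
  have hstar_mem : xstar ∈ Set.Icc (x₂ - dx) (x₂ + 2 * dx) := ⟨h1s, hs4⟩
  -- f strictly mono on [x₁, xstar]
  have hsubL : Set.Icc (x₂ - dx) xstar ⊆ Set.Icc (x₂ - dx) (x₂ + 2 * dx) :=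
    Set.Icc_subset_Icc le_rfl hs4
  have hsubR : Set.Icc xstar (x₂ + 2 * dx) ⊆ Set.Icc (x₂ - dx) (x₂ + 2 * dx) :=
    Set.Icc_subset_Icc h1s le_rfl
  have hcont : ContinuousOn f (Set.Icc (x₂ - dx) (x₂ + 2 * dx)) :=
    fun x hx => (hdiff x hx).continuousAt.continuousWithinAt
  have hmonoL : StrictMonoOn f (Set.Icc (x₂ - dx) xstar) := by
    apply strictMonoOn_of_deriv_pos (convex_Icc _ _) (hcont.mono hsubL)
    intro x hx
    rw [interior_Icc] at hx
    have hx' : x ∈ Set.Icc (x₂ - dx) (x₂ + 2 * dx) := ⟨hx.1.le, hx.2.le.trans hs4⟩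
    have := hmono hx' hstar_mem hx.2
    linarith [this, hzero.symm ▸ this]
  have hantiR : StrictAntiOn f (Set.Icc xstar (x₂ + 2 * dx)) := by
    apply strictAntiOn_of_deriv_neg (convex_Icc _ _) (hcont.mono hsubR)
    intro x hx
    rw [interior_Icc] at hx
    have hx' : x ∈ Set.Icc (x₂ - dx) (x₂ + 2 * dx) := ⟨h1s.trans hx.1.le, hx.2.le⟩
    have := hmono hstar_mem hx' hx.1
    rw [hzero] at this
    exact this
  have h12 : f (x₂ - dx) ≤ f x₂ :=
    hmonoL.monotoneOn ⟨le_rfl, h1s⟩ ⟨by linarith, hx2s⟩ (by linarith)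
  have h34 : f (x₂ + 2 * dx) ≤ f (x₂ + dx) :=
    hantiR.antitoneOn ⟨hxs3, by linarith⟩ ⟨hs4, le_rfl⟩ (by linarith)
  rcases le_total (f (x₂ + dx)) (f x₂) with h | h
  · exact Or.inl ⟨h12, h⟩
  · exact Or.inr ⟨h, h34⟩
end

section
/- Let c₁ > 0 and b₀ > 0, set T = 2c₁/b₀, and let g : ℝ → ℝ be twice continuously differentiable on [−T, T] with |g(0)| ≤ c₁, |g'(0)| ≥ b₀, and |g''(s)| ≤ b₀²/(2c₁) for all s ∈ [−T, T]. Then there exists t ∈ [−T, T] with g(t) = 0. -/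
/-!
Second-order Taylor expansion at `0` gives `g(±T) = g(0) ± g'(0) T + R±` with
`|R±| ≤ b₀²/(4c₁) · T² = c₁`, while `|g'(0)| T ≥ b₀ T = 2c₁ ≥ |g(0)| + c₁`. Hence `g(T)` and
`g(-T)` have opposite signs (which one is which depends on the sign of `g'(0)`), and the
intermediate value theorem produces the zero.
-/

open Set

theorem abs_sub_tangent_le_of_abs_iteratedDerivWithin_two_le {f : ℝ → ℝ} {s : Set ℝ}
    {x₀ x M : ℝ} (hs : UniqueDiffOn ℝ s) (hs_conn : s.OrdConnected) (hf : ContDiffOn ℝ 2 f s)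
    (hx₀ : x₀ ∈ s) (hx : x ∈ s) (hM : ∀ y ∈ s, |iteratedDerivWithin 2 f s y| ≤ M) :
    |f x - (f x₀ + derivWithin f s x₀ * (x - x₀))| ≤ M / 2 * (x - x₀) ^ 2 := by
  rcases eq_or_ne x₀ x with rfl | hne
  · simp
  have hsub : uIcc x₀ x ⊆ s := hs_conn.uIcc_subset hx₀ hx
  have hu : UniqueDiffOn ℝ (uIcc x₀ x) := uniqueDiffOn_uIcc hne
  have hfu : ContDiffOn ℝ (1 + 1) f (uIcc x₀ x) := hf.mono hsub
  obtain ⟨y, hy, hrem⟩ := taylor_mean_remainder_lagrange_iteratedDeriv hne hfu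
  have hy' : y ∈ s := hsub (uIoo_subset_uIcc_self hy)
  have hderiv : derivWithin f (uIcc x₀ x) x₀ = derivWithin f s x₀ :=
    ((hf.differentiableOn two_ne_zero x₀ hx₀).hasDerivWithinAt.mono hsub).derivWithin
      (hu x₀ left_mem_uIcc)
  have hsecond : iteratedDeriv 2 f y = iteratedDerivWithin 2 f s y := by
    rw [iteratedDerivWithin_eq_iteratedDeriv hs _ hy']
    exact hf.contDiffAt <|
      Filter.mem_of_superset (isOpen_Ioo.mem_nhds hy) (uIoo_subset_uIcc_self.trans hsub)
  have hlin : taylorWithinEval f 1 (uIcc x₀ x) x₀ x = f x₀ + derivWithin f s x₀ * (x - x₀) := by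
    rw [taylorWithinEval_succ]; simp [hderiv, mul_comm]
  rw [hsecond, hlin] at hrem
  calc |f x - (f x₀ + derivWithin f s x₀ * (x - x₀))|
      = |iteratedDerivWithin 2 f s y| * (x - x₀) ^ 2 / 2 := by
        rw [hrem]; norm_num [abs_mul, abs_div]
    _ ≤ M / 2 * (x - x₀) ^ 2 := by
        have := hM y hy'
        nlinarith [sq_nonneg (x - x₀)]

theorem zero_mem_uIcc_of_abs_sub_le {a h u v c : ℝ} (ha : |a| ≤ c) (hh : 2 * c ≤ |h|)
    (hu : |u - (a + h)| ≤ c) (hv : |v - (a - h)| ≤ c) : (0 : ℝ) ∈ uIcc v u := by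
  rw [mem_uIcc]
  rw [abs_le] at ha hu hv
  rcases le_abs'.mp hh with hneg | hpos
  · right; constructor <;> linarith
  · left; constructor <;> linarith

/-- Let `T = 2c₁/b₀` with `c₁, b₀ > 0`, and let `g` be twice
continuously differentiable on `[−T, T]` with `|g(0)| ≤ c₁`, `|g'(0)| ≥ b₀`
and `|g''(s)| ≤ b₀²/(2c₁)` on `[−T, T]`. Then `g` has a zero in `[−T, T]`. -/
theorem zero_of_directional_derivative
    (c₁ b₀ : ℝ) (hc₁ : 0 < c₁) (hb₀ : 0 < b₀) (T : ℝ) (hT : T = 2 * c₁ / b₀)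
    (g : ℝ → ℝ) (hg : ContDiffOn ℝ 2 g (Set.Icc (-T) T))
    (h0 : |g 0| ≤ c₁)
    (h1 : b₀ ≤ |derivWithin g (Set.Icc (-T) T) 0|)
    (h2 : ∀ s ∈ Set.Icc (-T) T,
      |iteratedDerivWithin 2 g (Set.Icc (-T) T) s| ≤ b₀ ^ 2 / (2 * c₁)) :
    ∃ t ∈ Set.Icc (-T) T, g t = 0 := by
  set s := Icc (-T) T
  have hT0 : 0 < T := by rw [hT]; positivity
  have hle : -T ≤ T := by linarith
  have hs : UniqueDiffOn ℝ s := uniqueDiffOn_Icc (by linarith)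
  have h0s : (0 : ℝ) ∈ s := ⟨by linarith, hT0.le⟩
  have hremainder : b₀ ^ 2 / (2 * c₁) / 2 * T ^ 2 = c₁ := by rw [hT]; field_simp
  have hslope : 2 * c₁ ≤ |derivWithin g s 0 * T| :=
    calc 2 * c₁ = b₀ * T := by rw [hT]; field_simp
      _ ≤ |derivWithin g s 0| * T := by gcongr
      _ = |derivWithin g s 0 * T| := by rw [abs_mul, abs_of_pos hT0]
  have hright := abs_sub_tangent_le_of_abs_iteratedDerivWithin_two_le hs ordConnected_Icc hg
    h0s (right_mem_Icc.mpr hle) h2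
  have hleft := abs_sub_tangent_le_of_abs_iteratedDerivWithin_two_le hs ordConnected_Icc hg
    h0s (left_mem_Icc.mpr hle) h2
  simp only [sub_zero, mul_neg, ← sub_eq_add_neg, neg_sq, hremainder] at hright hleft
  obtain ⟨t, ht, hgt⟩ := intermediate_value_uIcc
    (by rw [uIcc_of_le hle]; exact hg.continuousOn)
    (zero_mem_uIcc_of_abs_sub_le h0 hslope hright hleft)
  exact ⟨t, by rwa [uIcc_of_le hle] at ht, hgt⟩
end

section
/- Let n ≥ 2 and let F : ℝⁿ → ℝ be three times continuously differentiable. Let x₀ ∈ ℝⁿ with ∇F(x₀) ≠ 0, and let H be the Hessian of F at x₀ (a self-adjoint operator). Suppose v₁ is a unit eigenvector of H with eigenvalue λ₁ < 0 which is the smallest eigenvalue of H, let λₙ ≥ 0 be the largest eigenvalue of H, and assume ⟨v₁, ∇F(x₀)⟩ = 0. Set d = 2√(n−1)·‖∇F(x₀)‖/|λ₁|, and let M ≥ 0 be such that for every point ξ on the segment from x₀ − d·v₁ to x₀ + d·v₁ and all unit vectors u, w ∈ ℝⁿ, the third derivative satisfies |D³F(ξ)(v₁, u, w)| ≤ M.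 Assume moreover M ≤ (1/2)·λ₁²/(n·√(n−1)·‖∇F(x₀)‖) and λ₁/n + (1 − 1/n)·λₙ + d·M < 0. Then there exist a real number t with |t| ≤ d and a standard-basis coordinate direction e_j such that at the point x* = x₀ + t·v₁ the partial derivative ∂F/∂x_j(x*) = 0 and the second partial derivative ∂²F/∂x_j²(x*) < 0; i.e., x* is a coordinate local maximum of F lying within distance d of x₀ in the ridge-normal direction v₁. -/
/-!
Choose a coordinate direction `e = e_j` with `p = ⟪v₁, e⟫` satisfying `p² ≥ 1/n`, and follow
`g(t) = ∂_e F(x₀ + t v₁)` along the normal line. Its slope at `0` is `⟪H v₁, e⟫ = λ₁ p`, of size at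
least `|λ₁|/√n`, whereas `∇F(x₀) ⊥ v₁` gives `|g(0)| = |⟪∇F(x₀), e - p v₁⟫| ≤ ‖∇F(x₀)‖ √(1 - p²)`.
The third-derivative bound makes `g'` `M`-Lipschitz, so `g` moves by at least `|g'(0)| d - M d²/2`
in each direction over `[0, ±d]`, which exceeds `|g(0)|`: `g` vanishes somewhere in `[-d, d]`.
There `∂²_e F` is within `d M` of `⟪H e, e⟫ ≤ λ₁ p² + λₙ (1 - p²) ≤ λ₁/n + (1 - 1/n) λₙ`.
-/

open Set RealInnerProductSpace

theorem add_sub_le_of_deriv_ge_sub_mul {φ φ' : ℝ → ℝ} {d a M : ℝ} (hd : 0 ≤ d)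
    (hφ : ∀ s ∈ Icc 0 d, HasDerivAt φ (φ' s) s) (hφ' : ∀ s ∈ Icc 0 d, a - M * s ≤ φ' s) :
    φ 0 + (a * d - M * d ^ 2 / 2) ≤ φ d := by
  have hpoly (s : ℝ) : HasDerivAt (fun s => a * s - M * s ^ 2 / 2) (a - M * s) s :=
    (((hasDerivAt_id s).const_mul a).sub
      (((hasDerivAt_pow 2 s).const_mul M).div_const 2)).congr_deriv (by ring)
  have hmono : MonotoneOn (fun s => φ s - (a * s - M * s ^ 2 / 2)) (Icc 0 d) := by
    have hψ (s) (hs : s ∈ Icc 0 d) := (hφ s hs).sub (hpoly s)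
    refine monotoneOn_of_hasDerivWithinAt_nonneg (convex_Icc 0 d)
      (fun s hs => (hψ s hs).continuousAt.continuousWithinAt)
      (fun s hs => (hψ s (interior_subset hs)).hasDerivWithinAt) fun s hs => ?_
    linarith [hφ' s (interior_subset hs)]
  have hends := hmono (left_mem_Icc.2 hd) (right_mem_Icc.2 hd) hd
  simp only at hends
  linarith

theorem exists_eq_zero_of_deriv_ge {g g' : ℝ → ℝ} {d a b M : ℝ} (hd : 0 ≤ d)
    (hg : ∀ t ∈ Icc (-d) d, HasDerivAt g (g' t) t)
    (hg' : ∀ t ∈ Icc (-d) d, a - M * |t| ≤ g' t)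
    (hb : |g 0| ≤ b) (hgap : b ≤ a * d - M * d ^ 2 / 2) :
    ∃ t, |t| ≤ d ∧ g t = 0 := by
  have hmem : ∀ s ∈ Icc 0 d, s ∈ Icc (-d) d ∧ -s ∈ Icc (-d) d := fun s hs =>
    ⟨⟨by linarith [hs.1], hs.2⟩, ⟨by linarith [hs.2], by linarith [hs.1]⟩⟩
  have hright := add_sub_le_of_deriv_ge_sub_mul hd (fun s hs => hg s (hmem s hs).1)
    fun s hs => by simpa [abs_of_nonneg hs.1] using hg' s (hmem s hs).1
  have hleft := add_sub_le_of_deriv_ge_sub_mul (φ := fun s => -g (-s)) (φ' := fun s => g' (-s)) hd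
    (fun s hs => ((hg (-s) (hmem s hs).2).comp s (hasDerivAt_neg s)).neg.congr_deriv (by simp))
    fun s hs => by simpa [abs_of_nonneg hs.1] using hg' (-s) (hmem s hs).2
  have hcont : ContinuousOn g (Icc (-d) d) := fun t ht =>
    (hg t ht).continuousAt.continuousWithinAt
  have hsign : (0 : ℝ) ∈ Icc (g (-d)) (g d) := by
    simp only [neg_zero] at hleft
    constructor <;> linarith [abs_le.1 hb]
  obtain ⟨t, ht, hgt⟩ := intermediate_value_Icc (by linarith) hcont hsign
  exact ⟨t, abs_le.2 ht, hgt⟩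

theorem exists_eq_zero_of_abs_deriv_sub_le {g g' : ℝ → ℝ} {d a b M : ℝ} (hd : 0 ≤ d)
    (hg : ∀ t ∈ Icc (-d) d, HasDerivAt g (g' t) t)
    (hg' : ∀ t ∈ Icc (-d) d, |g' t - g' 0| ≤ M * |t|) (ha : a ≤ |g' 0|)
    (hb : |g 0| ≤ b) (hgap : b ≤ a * d - M * d ^ 2 / 2) :
    ∃ t, |t| ≤ d ∧ g t = 0 := by
  rcases le_total 0 (g' 0) with hpos | hneg
  · refine exists_eq_zero_of_deriv_ge hd hg (fun t ht => ?_) hb hgap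
    linarith [abs_of_nonneg hpos, (abs_le.1 (hg' t ht)).1]
  · have hslope (t) (ht : t ∈ Icc (-d) d) : a - M * |t| ≤ -g' t := by
      linarith [abs_of_nonpos hneg, (abs_le.1 (hg' t ht)).2]
    obtain ⟨t, ht, hgt⟩ := exists_eq_zero_of_deriv_ge (g := fun t => -g t) hd
      (fun t ht => (hg t ht).neg) hslope (by simpa using hb) hgap
    exact ⟨t, ht, neg_eq_zero.1 hgt⟩

theorem abs_sub_le_mul_abs_of_abs_deriv_le {f f' : ℝ → ℝ} {d M : ℝ}
    (hf : ∀ t ∈ Icc (-d) d, HasDerivAt f (f' t) t) (hf' : ∀ t ∈ Icc (-d) d, |f' t| ≤ M)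
    {t : ℝ} (ht : t ∈ Icc (-d) d) : |f t - f 0| ≤ M * |t| := by
  have h0 : (0 : ℝ) ∈ Icc (-d) d := ⟨by linarith [ht.1, ht.2], by linarith [ht.1, ht.2]⟩
  simpa using (convex_Icc (-d) d).norm_image_sub_le_of_norm_hasDerivWithin_le
    (fun s hs => (hf s hs).hasDerivWithinAt) hf' h0 ht

section Calculus

variable {E F : Type*} [NormedAddCommGroup E] [NormedSpace ℝ E]
  [NormedAddCommGroup F] [NormedSpace ℝ F]

theorem add_smul_mem_segment {x v : E} {d t : ℝ} (ht : t ∈ Icc (-d) d) :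
    x + t • v ∈ segment ℝ (x - d • v) (x + d • v) := by
  rw [sub_eq_add_neg, ← neg_smul, mem_segment_translate]
  have hseg := image_segment ℝ (LinearMap.toSpanSingleton ℝ E v).toAffineMap (-d) d
  simp only [LinearMap.coe_toAffineMap, LinearMap.toSpanSingleton_apply] at hseg
  rw [← hseg]
  exact mem_image_of_mem _ (by rwa [segment_eq_Icc (by linarith [ht.1, ht.2])])

theorem hasDerivAt_iteratedFDeriv_apply_add_smul {f : E → F} {k : ℕ}
    (hf : ContDiff ℝ (k + 1) f) (x v : E) (m : Fin k → E) (t : ℝ) :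
    HasDerivAt (fun t : ℝ => iteratedFDeriv ℝ k f (x + t • v) m)
      (iteratedFDeriv ℝ (k + 1) f (x + t • v) (Fin.cons v m)) t := by
  have hline : HasDerivAt (fun t : ℝ => x + t • v) v t := by
    simpa using ((hasDerivAt_id t).smul_const v).const_add x
  have hDk : HasFDerivAt (iteratedFDeriv ℝ k f)
      (fderiv ℝ (iteratedFDeriv ℝ k f) (x + t • v)) (x + t • v) :=
    ((hf.iteratedFDeriv_right (m := 1) (i := k) (by rw [add_comm])).differentiable
      one_ne_zero _).hasFDerivAt
  rw [iteratedFDeriv_succ_apply_left]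
  exact (ContinuousMultilinearMap.apply ℝ (fun _ : Fin k => E) F m).hasFDerivAt.comp_hasDerivAt t
    (hDk.comp_hasDerivAt t hline)

theorem hasDerivAt_fderiv_apply_add_smul {f : E → F} (hf : ContDiff ℝ 2 f) (x v e : E) (t : ℝ) :
    HasDerivAt (fun t : ℝ => fderiv ℝ f (x + t • v) e)
      (iteratedFDeriv ℝ 2 f (x + t • v) ![v, e]) t := by
  simpa [iteratedFDeriv_one_apply] using hasDerivAt_iteratedFDeriv_apply_add_smul hf x v ![e] t

theorem abs_iteratedFDeriv_apply_add_smul_sub_le {f : E → ℝ} {k : ℕ}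
    (hf : ContDiff ℝ (k + 1) f) {x v : E} {m : Fin k → E} {d M : ℝ}
    (hM : ∀ t ∈ Icc (-d) d, |iteratedFDeriv ℝ (k + 1) f (x + t • v) (Fin.cons v m)| ≤ M)
    {t : ℝ} (ht : t ∈ Icc (-d) d) :
    |iteratedFDeriv ℝ k f (x + t • v) m - iteratedFDeriv ℝ k f x m| ≤ M * |t| := by
  simpa using abs_sub_le_mul_abs_of_abs_deriv_le
    (fun s _ => hasDerivAt_iteratedFDeriv_apply_add_smul hf x v m s) hM ht

theorem exists_fderiv_apply_add_smul_eq_zero {f : E → ℝ} (hf : ContDiff ℝ 3 f) {x v e : E}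
    {d a b M : ℝ} (hd : 0 ≤ d)
    (hM : ∀ t ∈ Icc (-d) d, |iteratedFDeriv ℝ 3 f (x + t • v) ![v, v, e]| ≤ M)
    (ha : a ≤ |iteratedFDeriv ℝ 2 f x ![v, e]|) (hb : |fderiv ℝ f x e| ≤ b)
    (hgap : b ≤ a * d - M * d ^ 2 / 2) :
    ∃ t, |t| ≤ d ∧ fderiv ℝ f (x + t • v) e = 0 :=
  exists_eq_zero_of_abs_deriv_sub_le hd
    (fun t _ => hasDerivAt_fderiv_apply_add_smul (hf.of_le (by norm_num)) x v e t)
    (fun t ht => by simpa using abs_iteratedFDeriv_apply_add_smul_sub_le hf hM ht)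
    (by simpa using ha) (by simpa using hb) hgap

end Calculus

section InnerProduct

variable {E : Type*} [NormedAddCommGroup E] [InnerProductSpace ℝ E] {v : E}

theorem inner_sub_inner_smul_self (hv : ‖v‖ = 1) (e : E) : ⟪v, e - ⟪v, e⟫ • v⟫ = 0 := by
  rw [inner_sub_right, real_inner_smul_right, real_inner_self_eq_norm_sq, hv]; ring

theorem norm_sub_inner_smul_sq (hv : ‖v‖ = 1) (e : E) :
    ‖e - ⟪v, e⟫ • v‖ ^ 2 = ‖e‖ ^ 2 - ⟪v, e⟫ ^ 2 := by
  rw [norm_sub_sq_real, real_inner_smul_right, norm_smul, hv, real_inner_comm,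
    Real.norm_eq_abs, mul_one, sq_abs]
  ring

theorem abs_inner_le_norm_mul_norm_sub_inner_smul {g : E} (hvg : ⟪v, g⟫ = 0) (e : E) :
    |⟪g, e⟫| ≤ ‖g‖ * ‖e - ⟪v, e⟫ • v‖ := by
  have : ⟪g, e⟫ = ⟪g, e - ⟪v, e⟫ • v⟫ := by
    rw [inner_sub_right, real_inner_smul_right, real_inner_comm v g, hvg, mul_zero, sub_zero]
  exact this ▸ abs_real_inner_le_norm g _

theorem LinearMap.inner_map_self_le_mul_norm_sq {H : E →ₗ[ℝ] E} {Λ : ℝ}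
    (hΛ : ∀ u : E, ‖u‖ = 1 → ⟪u, H u⟫ ≤ Λ) (w : E) : ⟪w, H w⟫ ≤ Λ * ‖w‖ ^ 2 := by
  rcases eq_or_ne w 0 with rfl | hw
  · simp
  have hw' : 0 < ‖w‖ := norm_pos_iff.2 hw
  have hunit := hΛ (‖w‖⁻¹ • w) (by rw [norm_smul, norm_inv, norm_norm, inv_mul_cancel₀ hw'.ne'])
  rw [map_smul, real_inner_smul_left, real_inner_smul_right, ← mul_assoc, ← sq,
    inv_pow, inv_mul_le_iff₀ (by positivity)] at hunit
  linarith

theorem LinearMap.IsSymmetric.inner_map_le_of_eigenvector {H : E →ₗ[ℝ] E} (hH : H.IsSymmetric)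
    {μ Λ : ℝ} (hv : ‖v‖ = 1) (hHv : H v = μ • v) (hΛ : ∀ u : E, ‖u‖ = 1 → ⟪u, H u⟫ ≤ Λ)
    (e : E) : ⟪H e, e⟫ ≤ μ * ⟪v, e⟫ ^ 2 + Λ * ‖e - ⟪v, e⟫ • v‖ ^ 2 := by
  set p := ⟪v, e⟫
  set w := e - p • v
  have hvw : ⟪v, w⟫ = 0 := inner_sub_inner_smul_self hv e
  have hHvw : ⟪H v, w⟫ = 0 := by rw [hHv, real_inner_smul_left, hvw, mul_zero]
  have hvv : ⟪v, v⟫ = 1 := by rw [real_inner_self_eq_norm_sq, hv, one_pow]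
  have hsplit : ⟪H e, e⟫ = μ * p ^ 2 + ⟪w, H w⟫ := by
    have he : e = p • v + w := by simp [w]
    rw [he, map_add, map_smul, inner_add_left, inner_add_right, inner_add_right,
      real_inner_smul_left, real_inner_smul_left, real_inner_smul_right, real_inner_smul_right,
      hH w v, hHvw, real_inner_comm w, hHv, real_inner_smul_left, hvv, real_inner_smul_right,
      real_inner_comm v w, hvw]
    ring
  linarith [H.inner_map_self_le_mul_norm_sq hΛ w]

theorem LinearMap.IsSymmetric.inner_map_le_of_one_le_mul_inner_sq {H : E →ₗ[ℝ] E}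
    (hH : H.IsSymmetric) {μ Λ c : ℝ} (hv : ‖v‖ = 1) (hHv : H v = μ • v)
    (hΛ : ∀ u : E, ‖u‖ = 1 → ⟪u, H u⟫ ≤ Λ) (hμ : μ ≤ 0) (hΛ0 : 0 ≤ Λ) (hc : 0 < c) {e : E}
    (he : ‖e‖ = 1) (hve : 1 ≤ c * ⟪v, e⟫ ^ 2) : ⟪H e, e⟫ ≤ μ / c + (1 - 1 / c) * Λ := by
  have hp : 1 / c ≤ ⟪v, e⟫ ^ 2 := by rw [div_le_iff₀ hc]; linarith
  calc ⟪H e, e⟫ ≤ μ * ⟪v, e⟫ ^ 2 + Λ * (1 - ⟪v, e⟫ ^ 2) := by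
        simpa [norm_sub_inner_smul_sq hv, he] using hH.inner_map_le_of_eigenvector hv hHv hΛ e
    _ ≤ μ * (1 / c) + Λ * (1 - 1 / c) := by
        gcongr ?_ + Λ * ?_
        · exact mul_le_mul_of_nonpos_left hp hμ
        · linarith
    _ = μ / c + (1 - 1 / c) * Λ := by ring

end InnerProduct

theorem EuclideanSpace.exists_norm_sq_le_card_mul_inner_single_sq {ι : Type*} [Fintype ι]
    [DecidableEq ι] [Nonempty ι] (v : EuclideanSpace ℝ ι) :
    ∃ j, ‖v‖ ^ 2 ≤ Fintype.card ι * ⟪v, EuclideanSpace.single j 1⟫ ^ 2 := by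
  have hsum : ∑ _j : ι, ‖v‖ ^ 2 / Fintype.card ι ≤ ∑ j, v j ^ 2 := by
    rw [Finset.sum_const, Finset.card_univ, nsmul_eq_mul,
      mul_div_cancel₀ _ (Nat.cast_ne_zero.2 Fintype.card_ne_zero), EuclideanSpace.norm_sq_eq]
    simp [Real.norm_eq_abs, sq_abs]
  obtain ⟨j, -, hj⟩ := Finset.exists_le_of_sum_le Finset.univ_nonempty hsum
  rw [div_le_iff₀ (by positivity), mul_comm] at hj
  exact ⟨j, by simpa [EuclideanSpace.inner_single_right] using hj⟩

-- With `l = |λ₁|`, `p = ⟪v₁, e_j⟫` and `ω = ‖e_j - p v₁‖`: the arithmetic that the choice of `d`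
-- and the first bound on `M` are made for.
theorem ridge_gap_inequality {n G l M p ω d : ℝ} (hn : 1 ≤ n) (hG : 0 ≤ G) (hl : 0 < l)
    (hω : 0 ≤ ω) (hpω : p ^ 2 + ω ^ 2 = 1) (hp : 1 ≤ n * p ^ 2)
    (hd : d = 2 * √(n - 1) * G / l) (hM : M ≤ 1 / 2 * l ^ 2 / (n * √(n - 1) * G)) :
    G * ω ≤ l * |p| * d - M * d ^ 2 / 2 := by
  set s := √(n - 1)
  have hs2 : s ^ 2 = n - 1 := Real.sq_sqrt (by linarith)
  have hMd : M * d ^ 2 / 2 ≤ s * G / n := by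
    have hMsG : M * (n * s * G) ≤ l ^ 2 / 2 :=
      mul_le_of_le_div₀ (by positivity) (by positivity) (hM.trans_eq (by ring))
    calc M * d ^ 2 / 2 = M * (n * s * G) * (2 * s * G / (n * l ^ 2)) := by
          rw [hd]; field_simp
      _ ≤ l ^ 2 / 2 * (2 * s * G / (n * l ^ 2)) :=
          mul_le_mul_of_nonneg_right hMsG (by positivity)
      _ = s * G / n := by field_simp
  have hωp : ω ≤ s * |p| :=
    (sq_le_sq₀ hω (by positivity)).1 (by rw [mul_pow, sq_abs, hs2]; nlinarith)
  have hpn : 1 ≤ n * |p| :=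
    (sq_le_sq₀ zero_le_one (by positivity)).1 (by rw [one_pow, mul_pow, sq_abs]; nlinarith)
  have hsn : s * G / n ≤ G * (s * |p|) := by
    rw [div_le_iff₀ (by linarith)]
    nlinarith [mul_nonneg (Real.sqrt_nonneg (n - 1)) hG]
  have hld : l * |p| * d = 2 * G * (s * |p|) := by rw [hd]; field_simp
  linarith [mul_le_mul_of_nonneg_left hωp hG]

open EuclideanSpace in
theorem ridge_location_error_bound_general
    (n : ℕ) (hn : 2 ≤ n)
    (F : EuclideanSpace ℝ (Fin n) → ℝ) (hF : ContDiff ℝ 3 F)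
    (x₀ : EuclideanSpace ℝ (Fin n))
    (H : EuclideanSpace ℝ (Fin n) →ₗ[ℝ] EuclideanSpace ℝ (Fin n))
    (hH : ∀ u w : EuclideanSpace ℝ (Fin n),
      (inner ℝ (H u) w : ℝ) = iteratedFDeriv ℝ 2 F x₀ ![u, w])
    (lam₁ lamn : ℝ) (hlam₁neg : lam₁ < 0) (hlamn : 0 ≤ lamn)
    (v₁ : EuclideanSpace ℝ (Fin n)) (hv₁ : ‖v₁‖ = 1)
    (heig : H v₁ = lam₁ • v₁)
    (hmax : ∀ u : EuclideanSpace ℝ (Fin n), ‖u‖ = 1 → (inner ℝ u (H u) : ℝ) ≤ lamn)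
    (horth : (inner ℝ v₁ (gradient F x₀) : ℝ) = 0)
    (d : ℝ) (hd : d = 2 * Real.sqrt (n - 1) * ‖gradient F x₀‖ / |lam₁|)
    (M : ℝ) (hM0 : 0 ≤ M)
    (hM : ∀ ξ ∈ segment ℝ (x₀ - d • v₁) (x₀ + d • v₁),
      ∀ u w : EuclideanSpace ℝ (Fin n), ‖u‖ = 1 → ‖w‖ = 1 →
        |iteratedFDeriv ℝ 3 F ξ ![v₁, u, w]| ≤ M)
    (hM1 : M ≤ (1 / 2) * lam₁ ^ 2 / (n * Real.sqrt (n - 1) * ‖gradient F x₀‖))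
    (hM2 : lam₁ / n + (1 - 1 / n) * lamn + d * M < 0) :
    ∃ t : ℝ, |t| ≤ d ∧ ∃ j : Fin n,
      fderiv ℝ F (x₀ + t • v₁) (EuclideanSpace.single j 1) = 0 ∧
      iteratedFDeriv ℝ 2 F (x₀ + t • v₁)
        ![EuclideanSpace.single j 1, EuclideanSpace.single j 1] < 0 := by
  have : Nonempty (Fin n) := ⟨⟨0, by omega⟩⟩
  obtain ⟨j, hj⟩ := EuclideanSpace.exists_norm_sq_le_card_mul_inner_single_sq v₁
  rw [hv₁, one_pow, Fintype.card_fin] at hj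
  set e := EuclideanSpace.single j (1 : ℝ)
  have he : ‖e‖ = 1 := by simp [e]
  have hsymm : H.IsSymmetric := fun u w => by
    rw [real_inner_comm (H w) u, hH, hH]
    exact IsSymmSndFDerivAt.iteratedFDeriv_cons
      (hf := hF.contDiffAt.isSymmSndFDerivAt (by norm_num))
  have hd0 : 0 ≤ d := by rw [hd]; positivity
  have hMline (u w) (hu : ‖u‖ = 1) (hw : ‖w‖ = 1) (t) (ht : t ∈ Set.Icc (-d) d) :=
    hM _ (add_smul_mem_segment ht) u w hu hw
  obtain ⟨t, ht, hzero⟩ := exists_fderiv_apply_add_smul_eq_zero hF hd0 (hMline v₁ e hv₁ he)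
    (a := |lam₁| * |⟪v₁, e⟫|) (by rw [← hH, heig, real_inner_smul_left, abs_mul])
    (by rw [← inner_gradient_left]; exact abs_inner_le_norm_mul_norm_sub_inner_smul horth e)
    (ridge_gap_inequality (by norm_cast; omega) (norm_nonneg _) (abs_pos.2 hlam₁neg.ne)
      (norm_nonneg _) (by rw [norm_sub_inner_smul_sq hv₁, he]; ring) hj hd
      (by rwa [← sq_abs] at hM1))
  refine ⟨t, ht, j, hzero, ?_⟩
  have hdrift := abs_iteratedFDeriv_apply_add_smul_sub_le hF (hMline e e he he) (abs_le.1 ht)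
  calc iteratedFDeriv ℝ 2 F (x₀ + t • v₁) ![e, e]
      ≤ iteratedFDeriv ℝ 2 F x₀ ![e, e] + M * d := by
        linarith [(abs_le.1 hdrift).2, mul_le_mul_of_nonneg_left ht hM0]
    _ ≤ lam₁ / n + (1 - 1 / n) * lamn + d * M := by
        rw [← hH]
        linarith [hsymm.inner_map_le_of_one_le_mul_inner_sq hv₁ heig hmax hlam₁neg.le hlamn
          (by positivity) he hj]
    _ < 0 := hM2

open EuclideanSpace in
/-- Ridge-location error bound (the paper's Theorem 2). Let
`F : ℝⁿ → ℝ` (`n ≥ 2`) be `C³`, `x₀` a point with `∇F(x₀) ≠ 0`, `H` the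
Hessian of `F` at `x₀`, `v₁` a unit eigenvector for the smallest eigenvalue
`λ₁ < 0` of `H`, `λₙ ≥ 0` the largest eigenvalue, and `⟪v₁, ∇F(x₀)⟫ = 0`.
Set `d = 2√(n−1)·‖∇F(x₀)‖/|λ₁|` and let `M` bound `|D³F(ξ)(v₁,·,·)|` on the
normal segment. If `M ≤ (1/2)·λ₁²/(n·√(n−1)·‖∇F(x₀)‖)` and
`λ₁/n + (1 − 1/n)·λₙ + d·M < 0`, then some point `x* = x₀ + t·v₁` with
`|t| ≤ d` is a coordinate local maximum: `∂F/∂x_j(x*) = 0` and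
`∂²F/∂x_j²(x*) < 0` for some standard-basis direction `e_j`. -/
theorem ridge_location_error_bound
    (n : ℕ) (hn : 2 ≤ n)
    (F : EuclideanSpace ℝ (Fin n) → ℝ) (hF : ContDiff ℝ 3 F)
    (x₀ : EuclideanSpace ℝ (Fin n)) (hgrad : gradient F x₀ ≠ 0)
    (H : EuclideanSpace ℝ (Fin n) →ₗ[ℝ] EuclideanSpace ℝ (Fin n))
    (hH : ∀ u w : EuclideanSpace ℝ (Fin n),
      (inner ℝ (H u) w : ℝ) = iteratedFDeriv ℝ 2 F x₀ ![u, w])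
    (lam₁ lamn : ℝ) (hlam₁neg : lam₁ < 0) (hlamn : 0 ≤ lamn)
    (v₁ : EuclideanSpace ℝ (Fin n)) (hv₁ : ‖v₁‖ = 1)
    (heig : H v₁ = lam₁ • v₁)
    (hmin : ∀ u : EuclideanSpace ℝ (Fin n), ‖u‖ = 1 → lam₁ ≤ (inner ℝ u (H u) : ℝ))
    (hmax : ∀ u : EuclideanSpace ℝ (Fin n), ‖u‖ = 1 → (inner ℝ u (H u) : ℝ) ≤ lamn)
    (horth : (inner ℝ v₁ (gradient F x₀) : ℝ) = 0)
    (d : ℝ) (hd : d = 2 * Real.sqrt (n - 1) * ‖gradient F x₀‖ / |lam₁|)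
    (M : ℝ) (hM0 : 0 ≤ M)
    (hM : ∀ ξ ∈ segment ℝ (x₀ - d • v₁) (x₀ + d • v₁),
      ∀ u w : EuclideanSpace ℝ (Fin n), ‖u‖ = 1 → ‖w‖ = 1 →
        |iteratedFDeriv ℝ 3 F ξ ![v₁, u, w]| ≤ M)
    (hM1 : M ≤ (1 / 2) * lam₁ ^ 2 / (n * Real.sqrt (n - 1) * ‖gradient F x₀‖))
    (hM2 : lam₁ / n + (1 - 1 / n) * lamn + d * M < 0) :
    ∃ t : ℝ, |t| ≤ d ∧ ∃ j : Fin n,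
      fderiv ℝ F (x₀ + t • v₁) (EuclideanSpace.single j 1) = 0 ∧
      iteratedFDeriv ℝ 2 F (x₀ + t • v₁)
        ![EuclideanSpace.single j 1, EuclideanSpace.single j 1] < 0 :=
  ridge_location_error_bound_general n hn F hF x₀ H hH lam₁ lamn hlam₁neg hlamn v₁ hv₁ heig hmax
    horth d hd M hM0 hM hM1 hM2
end
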